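/- Let â be a real-valued random variable with E[â] ∈ {0,1} and E[â²] = Var(â) + E[â]². If Var(â) = e^ε/(e^ε − 1)² for some ε > 0, and Ẑ = Π_{j=1}^k â_j is a product of k independent copies of such variables each with E[â_j] ∈ {0,1}, then Var(Ẑ) ≥ (e^ε/(e^ε − 1)²)^k. -/

import Mathlib

open MeasureTheory ProbabilityTheory

-- independence is invariant under a.e. modification
lemma iIndepFun_congr_ae {Ω ι : Type*} [MeasurableSpace Ω] {μ : Measure Ω}
    {β : ι → Type*} {m : ∀ i, MeasurableSpace (β i)} {f g : ∀ i, Ω → β i}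
    (h : ∀ i, f i =ᵐ[μ] g i) (hf : iIndepFun f μ) : iIndepFun g μ := by
  rw [iIndepFun_iff_measure_inter_preimage_eq_mul] at hf ⊢
  intro S sets H
  have hpre : ∀ i, μ (g i ⁻¹' sets i) = μ (f i ⁻¹' sets i) := fun i =>
    measure_congr ((h i).mono fun ω hω => by
      show (ω ∈ g i ⁻¹' sets i) = (ω ∈ f i ⁻¹' sets i)
      simp only [Set.mem_preimage, hω])
  have hinter : μ (⋂ i ∈ S, g i ⁻¹' sets i) = μ (⋂ i ∈ S, f i ⁻¹' sets i) := by
    refine measure_congr ?_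
    have hae : ∀ᵐ ω ∂μ, ∀ i ∈ S, f i ω = g i ω :=
      (MeasureTheory.ae_ball_iff S.countable_toSet).2 fun i _ => h i
    filter_upwards [hae] with ω hω
    show (ω ∈ ⋂ i ∈ S, g i ⁻¹' sets i) = (ω ∈ ⋂ i ∈ S, f i ⁻¹' sets i)
    simp only [Set.mem_iInter, Set.mem_preimage, eq_iff_iff]
    constructor <;> intro hh j hj
    · rw [hω j hj]; exact hh j hj
    · rw [← hω j hj]; exact hh j hj
  rw [hinter, hf S H]
  exact Finset.prod_congr rfl fun i _ => (hpre i).symm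

-- integral of a product of independent integrable random variables
lemma integral_finset_prod_of_indep {Ω ι : Type*} [MeasurableSpace Ω] {μ : Measure Ω}
    [IsProbabilityMeasure μ] {f : ι → Ω → ℝ}
    (hindep : iIndepFun f μ)
    (hmeas : ∀ i, Measurable (f i)) (hint : ∀ i, Integrable (f i) μ)
    (s : Finset ι) :
    Integrable (fun ω => ∏ i ∈ s, f i ω) μ ∧
      (∫ ω, ∏ i ∈ s, f i ω ∂μ) = ∏ i ∈ s, ∫ ω, f i ω ∂μ := by
  classical
  induction s using Finset.induction_on with
  | empty => simp [integrable_const (1 : ℝ)]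
  | @insert i s hi ih =>
    have hIF : IndepFun (∏ j ∈ s, f j) (f i) μ :=
      hindep.indepFun_finsetProd_of_notMem hmeas hi
    have hps : (∏ j ∈ s, f j) = fun ω => ∏ j ∈ s, f j ω := by
      ext ω; simp
    rw [hps] at hIF
    have hint' : Integrable (fun ω => (∏ j ∈ s, f j ω) * f i ω) μ :=
      hIF.integrable_mul ih.1 (hint i)
    have hval : (∫ ω, (∏ j ∈ s, f j ω) * f i ω ∂μ)
        = (∫ ω, ∏ j ∈ s, f j ω ∂μ) * ∫ ω, f i ω ∂μ :=
      hIF.integral_fun_mul_eq_mul_integral ih.1.aestronglyMeasurable (hint i).aestronglyMeasurable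
    constructor
    · refine hint'.congr (Filter.Eventually.of_forall fun ω => ?_)
      show (∏ j ∈ s, f j ω) * f i ω = ∏ j ∈ insert i s, f j ω
      rw [Finset.prod_insert hi]; ring
    · have heq : (∫ ω, ∏ j ∈ insert i s, f j ω ∂μ)
          = ∫ ω, (∏ j ∈ s, f j ω) * f i ω ∂μ :=
        integral_congr_ae (Filter.Eventually.of_forall fun ω => by
          show ∏ j ∈ insert i s, f j ω = (∏ j ∈ s, f j ω) * f i ω
          rw [Finset.prod_insert hi]; ring)
      rw [heq, hval, ih.2, Finset.prod_insert hi]; ring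

lemma prod_add_ge {ι : Type*} (s : Finset ι) (hs : s.Nonempty) (v : ℝ) (hv : 0 ≤ v)
    (x : ι → ℝ) (hx : ∀ i, 0 ≤ x i) :
    v ^ s.card + ∏ i ∈ s, x i ≤ ∏ i ∈ s, (v + x i) := by
  classical
  induction hs using Finset.Nonempty.cons_induction with
  | singleton i => simp
  | cons i s hi hs ih =>
    rw [Finset.prod_cons, Finset.prod_cons, Finset.card_cons]
    have h1 : (0:ℝ) ≤ ∏ j ∈ s, x j := Finset.prod_nonneg fun j _ => hx j
    have h2 : (0:ℝ) ≤ v ^ s.card := pow_nonneg hv _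
    have h3 : (0:ℝ) ≤ x i := hx i
    calc v ^ (s.card + 1) + x i * ∏ j ∈ s, x j
        ≤ (v + x i) * (v ^ s.card + ∏ j ∈ s, x j) := by ring_nf; nlinarith
      _ ≤ (v + x i) * ∏ j ∈ s, (v + x j) := by
          exact mul_le_mul_of_nonneg_left ih (by linarith)

theorem stmt9 {Ω : Type*} [MeasureSpace Ω] [IsProbabilityMeasure (ℙ : Measure Ω)]
    (k : ℕ) (hk : 1 ≤ k) (ε : ℝ) (hε : 0 < ε)
    (a : Fin k → Ω → ℝ)
    (hL2 : ∀ j, MemLp (a j) 2)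
    (hindep : iIndepFun a ℙ)
    (hvar : ∀ j, variance (a j) ℙ = Real.exp ε / (Real.exp ε - 1) ^ 2)
    (hmean : ∀ j, (∫ ω, a j ω) = 0 ∨ (∫ ω, a j ω) = 1) :
    (Real.exp ε / (Real.exp ε - 1) ^ 2) ^ k ≤ variance (fun ω => ∏ j, a j ω) ℙ := by
  classical
  set v : ℝ := Real.exp ε / (Real.exp ε - 1) ^ 2 with hv_def
  have hexp : 1 < Real.exp ε := by
    rw [← Real.exp_zero]; exact Real.exp_lt_exp.2 hε
  have hv_pos : 0 < v := div_pos (Real.exp_pos ε) (pow_pos (by linarith) 2)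
  -- measurable modifications
  set b : Fin k → Ω → ℝ := fun j => (hL2 j).1.mk (a j) with hb_def
  have hbmeas : ∀ j, Measurable (b j) := fun j =>
    (hL2 j).1.stronglyMeasurable_mk.measurable
  have hab : ∀ j, a j =ᵐ[ℙ] b j := fun j => (hL2 j).1.ae_eq_mk
  have hbL2 : ∀ j, MemLp (b j) 2 := fun j => (hL2 j).ae_eq (hab j)
  have hbindep : iIndepFun b ℙ :=
    iIndepFun_congr_ae hab hindep
  have hbint : ∀ j, Integrable (b j) := fun j => (hbL2 j).integrable one_le_two
  -- squares
  have hb2meas : ∀ j, Measurable (fun ω => b j ω ^ 2) := fun j => (hbmeas j).pow_const 2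
  have hb2indep : iIndepFun (fun j ω => b j ω ^ 2) ℙ :=
    hbindep.comp (fun _ x => x ^ 2) (fun _ => measurable_id.pow_const 2)
  have hb2int : ∀ j, Integrable (fun ω => b j ω ^ 2) := fun j => (hbL2 j).integrable_sq
  -- product integrals
  obtain ⟨hPint, hPval⟩ := integral_finset_prod_of_indep hbindep hbmeas hbint Finset.univ
  obtain ⟨hP2int, hP2val⟩ := integral_finset_prod_of_indep hb2indep hb2meas hb2int Finset.univ
  -- the product of a's equals product of b's a.e.
  have hprod_ae : (fun ω => ∏ j, a j ω) =ᵐ[ℙ] (fun ω => ∏ j, b j ω) := by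
    have : ∀ᵐ ω ∂(ℙ : Measure Ω), ∀ j, a j ω = b j ω := ae_all_iff.2 hab
    filter_upwards [this] with ω hω
    exact Finset.prod_congr rfl fun j _ => hω j
  -- MemLp of the product of b's
  have hPb2 : MemLp (fun ω => ∏ j, b j ω) 2 := by
    rw [memLp_two_iff_integrable_sq
      (Measurable.aestronglyMeasurable (by measurability))]
    refine hP2int.congr (Filter.Eventually.of_forall fun ω => ?_)
    simp [Finset.prod_pow]
  have hPa2 : MemLp (fun ω => ∏ j, a j ω) 2 := hPb2.ae_eq hprod_ae.symm
  -- compute the variance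
  rw [variance_eq_sub hPa2]
  have hInt2 : (∫ ω, (fun ω => ∏ j, a j ω) ω ^ 2 ∂(ℙ : Measure Ω))
      = ∏ j, ∫ ω, b j ω ^ 2 ∂(ℙ : Measure Ω) := by
    rw [← hP2val]
    refine integral_congr_ae ?_
    filter_upwards [hprod_ae] with ω hω
    simp only [hω, ← Finset.prod_pow]
  have hInt1 : (∫ ω, (fun ω => ∏ j, a j ω) ω ∂(ℙ : Measure Ω))
      = ∏ j, ∫ ω, b j ω ∂(ℙ : Measure Ω) := by
    rw [← hPval]
    exact integral_congr_ae hprod_ae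
  simp only [Pi.pow_apply]
  rw [hInt2, hInt1]
  -- per-coordinate moments
  have hm : ∀ j, (∫ ω, b j ω ∂(ℙ : Measure Ω)) = ∫ ω, a j ω := fun j =>
    (integral_congr_ae (hab j)).symm
  have hsq : ∀ j, (∫ ω, b j ω ^ 2 ∂(ℙ : Measure Ω)) = v + (∫ ω, a j ω) ^ 2 := by
    intro j
    have h1 : (∫ ω, b j ω ^ 2 ∂(ℙ : Measure Ω)) = ∫ ω, a j ω ^ 2 := by
      refine integral_congr_ae ?_
      filter_upwards [hab j] with ω hω using by rw [hω]
    have h2 := variance_eq_sub (hL2 j)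
    rw [hvar j] at h2
    simp only [Pi.pow_apply] at h2
    rw [h1]
    linarith [h2]
  have hprod_sq : (∏ j, ∫ ω, b j ω ∂(ℙ : Measure Ω)) ^ 2
      = ∏ j : Fin k, (∫ ω, a j ω) ^ 2 := by
    rw [← Finset.prod_pow]
    exact Finset.prod_congr rfl fun j _ => by rw [hm j]
  rw [hprod_sq, Finset.prod_congr rfl fun j _ => hsq j]
  -- arithmetic
  have hkey := prod_add_ge Finset.univ (Finset.univ_nonempty_iff.2
    ⟨⟨0, hk⟩⟩) v hv_pos.le (fun j => (∫ ω, a j ω) ^ 2) (fun j => sq_nonneg _)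
  rw [Finset.card_univ, Fintype.card_fin] at hkey
  linarith [hkey]
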